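/- arXiv:0711.3056 — 2 statements merged into one kernel-verified Lean document; each statement's English description precedes it below -/
import Mathlib

section
/- Let H₁, H₂ be Hilbert subspaces of E with reproducing operators H₁, H₂, and let H₁ + H₂ be their sum (the image of the Hilbert space product H₁ × H₂ under Φ(ξ₁,ξ₂) = J₁ξ₁ + J₂ξ₂, with the quotient Hilbert norm ‖ξ‖² = inf{‖ξ₁‖₁² + ‖ξ₂‖₂² : ξ = ξ₁ + ξ₂}). Then the reproducing operator of H₁ + H₂ equals H₁ + H₂. -/
/-!
Put `P = H₁ × H₂` with the `ℓ²` norm and `Φ (ξ₁, ξ₂) = J₁ ξ₁ + J₂ ξ₂`, so that `K` is `Φ(P)`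
with the quotient norm. For `κ = JstarK x` and `p₀ = (Jstar₁ x, Jstar₂ x)` one has
`⟪κ, ξ⟫ = ⟪p₀, p⟫` whenever `ξ` lies over `p`. If `ξ₀` lies over `p₀`, then
`⟪κ, ξ₀⟫ = ‖p₀‖² ≥ ‖ξ₀‖²`, while Cauchy–Schwarz over the fibre of `κ` gives `‖κ‖⁴ ≤ ‖p₀‖² ‖κ‖²`.
Hence `‖κ - ξ₀‖² ≤ 0`.
-/

open Set
open scoped InnerProductSpace

theorem le_of_sq_le_mul_of_eq_sInf {S : Set ℝ} {m c : ℝ} (hS : S.Nonempty) (hm : 0 ≤ m)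
    (hc : 0 ≤ c) (hmS : m = sInf S) (h : ∀ s ∈ S, m ^ 2 ≤ c * s) : m ≤ c := by
  have hmc : m * m ≤ c * m := by
    rw [← sq, hmS, ← smul_eq_mul, ← Real.sInf_smul_of_nonneg hc]
    refine le_csInf (hS.smul_set) ?_
    rintro _ ⟨s, hs, rfl⟩
    rw [← hmS]
    exact h s hs
  rcases hm.eq_or_lt with rfl | hpos
  · exact hc
  · exact le_of_mul_le_mul_right hmc hpos

def IsQuotientNormAlong {K P E : Type*} [Norm K] [Norm P] (JK : K → E) (Φ : P → E) : Prop :=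
  ∀ ξ : K, ‖ξ‖ ^ 2 = sInf {r : ℝ | ∃ p : P, JK ξ = Φ p ∧ r = ‖p‖ ^ 2}

section QuotientNorm

variable {𝕜 K P E : Type*} [RCLike 𝕜]
  [NormedAddCommGroup K] [InnerProductSpace 𝕜 K] [NormedAddCommGroup P] [InnerProductSpace 𝕜 P]
  {JK : K → E} {Φ : P → E}

theorem IsQuotientNormAlong.norm_sq_le (hq : IsQuotientNormAlong JK Φ) {ξ : K} {p : P}
    (h : JK ξ = Φ p) : ‖ξ‖ ^ 2 ≤ ‖p‖ ^ 2 := by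
  rw [hq ξ]
  refine csInf_le ⟨0, ?_⟩ ⟨p, h, rfl⟩
  rintro _ ⟨q, -, rfl⟩
  positivity

theorem IsQuotientNormAlong.norm_sq_le_of_inner_eq (hq : IsQuotientNormAlong JK Φ) {κ : K}
    {p₀ : P} (hκ : JK κ ∈ range Φ) (hinner : ∀ p, JK κ = Φ p → ⟪κ, κ⟫_𝕜 = ⟪p₀, p⟫_𝕜) :
    ‖κ‖ ^ 2 ≤ ‖p₀‖ ^ 2 := by
  obtain ⟨p, hp⟩ := hκ
  refine le_of_sq_le_mul_of_eq_sInf ?_ (by positivity) (by positivity) (hq κ) ?_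
  · exact ⟨_, p, hp.symm, rfl⟩
  rintro _ ⟨q, hq, rfl⟩
  have hCS : ‖κ‖ ^ 2 ≤ ‖p₀‖ * ‖q‖ := by
    rw [← inner_self_eq_norm_sq (𝕜 := 𝕜), hinner q hq]
    exact re_inner_le_norm p₀ q
  calc (‖κ‖ ^ 2) ^ 2 ≤ (‖p₀‖ * ‖q‖) ^ 2 := pow_le_pow_left₀ (by positivity) hCS 2
    _ = ‖p₀‖ ^ 2 * ‖q‖ ^ 2 := mul_pow _ _ _

theorem IsQuotientNormAlong.eq_of_inner_eq (hq : IsQuotientNormAlong JK Φ) {κ ξ₀ : K} {p₀ : P}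
    (hκ : JK κ ∈ range Φ) (hξ₀ : JK ξ₀ = Φ p₀)
    (hinner : ∀ ξ p, JK ξ = Φ p → ⟪κ, ξ⟫_𝕜 = ⟪p₀, p⟫_𝕜) : κ = ξ₀ := by
  have hκ_le := hq.norm_sq_le_of_inner_eq hκ (hinner κ)
  have hξ₀_le := hq.norm_sq_le hξ₀
  have hre : RCLike.re ⟪κ, ξ₀⟫_𝕜 = ‖p₀‖ ^ 2 := by
    rw [hinner ξ₀ p₀ hξ₀, inner_self_eq_norm_sq]
  have hdist : ‖κ - ξ₀‖ ^ 2 ≤ 0 := by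
    rw [norm_sub_sq (𝕜 := 𝕜), hre]
    linarith
  rw [← sub_eq_zero, ← norm_eq_zero]
  exact pow_eq_zero_iff two_ne_zero |>.mp (le_antisymm hdist (by positivity))

end QuotientNorm

/-- In operator form: `JK JK* = Φ Φ*` when `JK` embeds the image of `Φ` with the quotient norm. -/
theorem reproducing_operator_of_image {𝕜 E Estar K P : Type*} [RCLike 𝕜]
    [NormedAddCommGroup K] [InnerProductSpace 𝕜 K] [NormedAddCommGroup P] [InnerProductSpace 𝕜 P]
    (B : Estar → E → 𝕜) {JK : K → E} {Φ : P → E} {JstarK : Estar → K} {Φstar : Estar → P}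
    (hJstarK : ∀ x ξ, ⟪JstarK x, ξ⟫_𝕜 = B x (JK ξ)) (hΦstar : ∀ x p, ⟪Φstar x, p⟫_𝕜 = B x (Φ p))
    (hrange : range JK = range Φ) (hq : IsQuotientNormAlong JK Φ) (x : Estar) :
    JK (JstarK x) = Φ (Φstar x) := by
  obtain ⟨ξ₀, hξ₀⟩ : Φ (Φstar x) ∈ range JK := hrange ▸ mem_range_self _
  have hκ : JstarK x = ξ₀ := by
    refine hq.eq_of_inner_eq (𝕜 := 𝕜) (hrange ▸ mem_range_self _) hξ₀ fun ξ p h => ?_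
    rw [hJstarK, hΦstar, h]
  rw [hκ, hξ₀]

section Sum

variable {E H₁ H₂ : Type*} [Add E]

def sumMap (J₁ : H₁ → E) (J₂ : H₂ → E) (p : WithLp 2 (H₁ × H₂)) : E :=
  J₁ (WithLp.ofLp p).1 + J₂ (WithLp.ofLp p).2

theorem range_sumMap (J₁ : H₁ → E) (J₂ : H₂ → E) :
    range (sumMap J₁ J₂) = {φ : E | ∃ ξ₁ ξ₂, φ = J₁ ξ₁ + J₂ ξ₂} := by
  ext φ
  constructor
  · rintro ⟨p, rfl⟩
    exact ⟨_, _, rfl⟩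
  · rintro ⟨ξ₁, ξ₂, rfl⟩
    exact ⟨WithLp.toLp 2 (ξ₁, ξ₂), rfl⟩

theorem isQuotientNormAlong_sumMap_iff {K : Type*} [SeminormedAddCommGroup H₁]
    [SeminormedAddCommGroup H₂] [Norm K] {JK : K → E} {J₁ : H₁ → E} {J₂ : H₂ → E} :
    IsQuotientNormAlong JK (sumMap J₁ J₂) ↔ ∀ ξ : K, ‖ξ‖ ^ 2 =
      sInf {r : ℝ | ∃ ξ₁ ξ₂, JK ξ = J₁ ξ₁ + J₂ ξ₂ ∧ r = ‖ξ₁‖ ^ 2 + ‖ξ₂‖ ^ 2} := by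
  refine forall_congr' fun ξ => Eq.congr_right (congrArg sInf (Set.ext fun r => ?_))
  constructor
  · rintro ⟨p, h, rfl⟩
    exact ⟨p.fst, p.snd, h, WithLp.prod_norm_sq_eq_of_L2 p⟩
  · rintro ⟨ξ₁, ξ₂, h, rfl⟩
    exact ⟨WithLp.toLp 2 (ξ₁, ξ₂), h,
      (WithLp.prod_norm_sq_eq_of_L2 (WithLp.toLp 2 (ξ₁, ξ₂))).symm⟩

end Sum

theorem reproducing_operator_of_sum_general
    {E : Type*} [AddCommGroup E] [Module ℂ E] [TopologicalSpace E]
    {Estar : Type*} (B : Estar → E → ℂ)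
    {H₁ : Type*} [NormedAddCommGroup H₁] [InnerProductSpace ℂ H₁]
    {H₂ : Type*} [NormedAddCommGroup H₂] [InnerProductSpace ℂ H₂]
    {K : Type*} [NormedAddCommGroup K] [InnerProductSpace ℂ K]
    (J₁ : H₁ →L[ℂ] E)
    (J₂ : H₂ →L[ℂ] E)
    (JK : K →L[ℂ] E)
    (Jstar₁ : Estar → H₁) (Jstar₂ : Estar → H₂) (JstarK : Estar → K)
    (hJstar₁ : ∀ (x : Estar) (ξ : H₁), (inner ℂ (Jstar₁ x) ξ : ℂ) = B x (J₁ ξ))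
    (hJstar₂ : ∀ (x : Estar) (ξ : H₂), (inner ℂ (Jstar₂ x) ξ : ℂ) = B x (J₂ ξ))
    (hJstarK : ∀ (x : Estar) (ξ : K), (inner ℂ (JstarK x) ξ : ℂ) = B x (JK ξ))
    (hrange : Set.range JK = {φ : E | ∃ (ξ₁ : H₁) (ξ₂ : H₂), φ = J₁ ξ₁ + J₂ ξ₂})
    (hnorm : ∀ ξ : K, ‖ξ‖ ^ 2 =
      sInf {r : ℝ | ∃ (ξ₁ : H₁) (ξ₂ : H₂), JK ξ = J₁ ξ₁ + J₂ ξ₂ ∧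
        r = ‖ξ₁‖ ^ 2 + ‖ξ₂‖ ^ 2}) :
    ∀ x : Estar, JK (JstarK x) = J₁ (Jstar₁ x) + J₂ (Jstar₂ x) := by
  have hmem₁ (ξ₁ : H₁) : J₁ ξ₁ ∈ range JK := hrange ▸ ⟨ξ₁, 0, by simp⟩
  have hmem₂ (ξ₂ : H₂) : J₂ ξ₂ ∈ range JK := hrange ▸ ⟨0, ξ₂, by simp⟩
  -- `B x` is additive on the range of `JK`, where it is the functional `⟪JstarK x, ·⟫`.
  have hΦstar (x : Estar) (p : WithLp 2 (H₁ × H₂)) :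
      ⟪WithLp.toLp 2 (Jstar₁ x, Jstar₂ x), p⟫_ℂ = B x (sumMap J₁ J₂ p) := by
    obtain ⟨ξ₁, h₁⟩ := hmem₁ (WithLp.ofLp p).1
    obtain ⟨ξ₂, h₂⟩ := hmem₂ (WithLp.ofLp p).2
    rw [WithLp.prod_inner_apply, hJstar₁, hJstar₂, ← h₁, ← h₂, ← hJstarK, ← hJstarK,
      ← inner_add_right, hJstarK, map_add, h₁, h₂, sumMap]
  exact reproducing_operator_of_image B hJstarK hΦstar (hrange.trans (range_sumMap J₁ J₂).symm)
    (isQuotientNormAlong_sumMap_iff.mpr hnorm)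

/-- The reproducing operator of the sum `H₁ + H₂` of two Hilbert
subspaces (the image of `H₁ × H₂` under `(ξ₁,ξ₂) ↦ J₁ξ₁ + J₂ξ₂` with the quotient
norm `‖ξ‖² = inf {‖ξ₁‖² + ‖ξ₂‖²}`) is the sum `H₁ + H₂` of the reproducing
operators. -/
theorem reproducing_operator_of_sum
    {E : Type*} [AddCommGroup E] [Module ℂ E] [TopologicalSpace E]
    {Estar : Type*} (B : Estar → E → ℂ)
    (hsep : ∀ φ : E, (∀ x : Estar, B x φ = 0) → φ = 0)
    {H₁ : Type*} [NormedAddCommGroup H₁] [InnerProductSpace ℂ H₁] [CompleteSpace H₁]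
    {H₂ : Type*} [NormedAddCommGroup H₂] [InnerProductSpace ℂ H₂] [CompleteSpace H₂]
    {K : Type*} [NormedAddCommGroup K] [InnerProductSpace ℂ K] [CompleteSpace K]
    (J₁ : H₁ →L[ℂ] E) (hJ₁ : Function.Injective J₁)
    (J₂ : H₂ →L[ℂ] E) (hJ₂ : Function.Injective J₂)
    (JK : K →L[ℂ] E) (hJK : Function.Injective JK)
    (Jstar₁ : Estar → H₁) (Jstar₂ : Estar → H₂) (JstarK : Estar → K)
    (hJstar₁ : ∀ (x : Estar) (ξ : H₁), (inner ℂ (Jstar₁ x) ξ : ℂ) = B x (J₁ ξ))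
    (hJstar₂ : ∀ (x : Estar) (ξ : H₂), (inner ℂ (Jstar₂ x) ξ : ℂ) = B x (J₂ ξ))
    (hJstarK : ∀ (x : Estar) (ξ : K), (inner ℂ (JstarK x) ξ : ℂ) = B x (JK ξ))
    (hrange : Set.range JK = {φ : E | ∃ (ξ₁ : H₁) (ξ₂ : H₂), φ = J₁ ξ₁ + J₂ ξ₂})
    (hnorm : ∀ ξ : K, ‖ξ‖ ^ 2 =
      sInf {r : ℝ | ∃ (ξ₁ : H₁) (ξ₂ : H₂), JK ξ = J₁ ξ₁ + J₂ ξ₂ ∧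
        r = ‖ξ₁‖ ^ 2 + ‖ξ₂‖ ^ 2}) :
    ∀ x : Estar, JK (JstarK x) = J₁ (Jstar₁ x) + J₂ (Jstar₂ x) :=
  reproducing_operator_of_sum_general B J₁ J₂ JK Jstar₁ Jstar₂ JstarK hJstar₁ hJstar₂ hJstarK hrange
    hnorm
end

section
/- Let H₁, H₂ be Hilbert subspaces of E. Define an inner product on the intersection H₁ ∩ H₂ by (ξ, χ) = (ξ, χ)_{H₁} + (ξ, χ)_{H₂}. Then this form is a positive definite inner product, and if H₁ ∩ H₂ is complete under the induced norm (which holds since both H₁ and H₂ are Hilbert spaces continuously included in E), H₁ ∩ H₂ with this inner product is a Hilbert subspace of E satisfying H₁ ∩ H₂ ≤ H₁ and H₁ ∩ H₂ ≤ H₂. -/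
open scoped ComplexOrder

/-! Evaluating the sum form on the diagonal gives `‖ξ‖² = ‖ξ₁‖² + ‖ξ₂‖²`, whence both contractions.
The bound `‖ξ₁‖ ≤ ‖ξ‖` makes the inclusion of the intersection factor as `J₁ ∘ T` with `T`
linear and bounded, so it is continuous because `J₁` is. -/

theorem LinearMap.continuous_of_range_subset_of_norm_le {R K H E : Type*} [CommSemiring R]
    [SeminormedAddCommGroup K] [Module R K] [SeminormedAddCommGroup H] [Module R H]
    [AddCommMonoid E] [Module R E] [TopologicalSpace E]
    (f : K →ₗ[R] E) (J : H →L[R] E) (hJ : Function.Injective J)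
    (hrange : Set.range f ⊆ Set.range J) (C : ℝ) (hbound : ∀ x y, f x = J y → ‖y‖ ≤ C * ‖x‖) :
    Continuous f := by
  let T : K →ₗ[R] H :=
    LinearMap.codRestrictOfInjective f (J : H →ₗ[R] E) hJ fun x => hrange ⟨x, rfl⟩
  have hfactor : ⇑f = J ∘ T :=
    funext fun x => (LinearMap.codRestrictOfInjective_comp_apply _ _ _ _ x).symm
  have hT : Continuous T :=
    AddMonoidHomClass.continuous_of_bound T C fun x => hbound x (T x) (congrFun hfactor x)
  exact hfactor ▸ J.continuous.comp hT

section NormSq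

variable {𝕜 K H₁ H₂ : Type*} [RCLike 𝕜]
  [SeminormedAddCommGroup K] [InnerProductSpace 𝕜 K]
  [SeminormedAddCommGroup H₁] [InnerProductSpace 𝕜 H₁]
  [SeminormedAddCommGroup H₂] [InnerProductSpace 𝕜 H₂]

theorem norm_sq_eq_add_of_inner_self_eq_add {ξ : K} {ξ₁ : H₁} {ξ₂ : H₂}
    (h : (inner 𝕜 ξ ξ : 𝕜) = inner 𝕜 ξ₁ ξ₁ + inner 𝕜 ξ₂ ξ₂) :
    ‖ξ‖ ^ 2 = ‖ξ₁‖ ^ 2 + ‖ξ₂‖ ^ 2 := by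
  rw [inner_self_eq_norm_sq_to_K, inner_self_eq_norm_sq_to_K, inner_self_eq_norm_sq_to_K] at h
  exact_mod_cast h

theorem norm_le_of_inner_self_eq_add {ξ : K} {ξ₁ : H₁} {ξ₂ : H₂}
    (h : (inner 𝕜 ξ ξ : 𝕜) = inner 𝕜 ξ₁ ξ₁ + inner 𝕜 ξ₂ ξ₂) : ‖ξ₁‖ ≤ ‖ξ‖ := by
  have hsq : ‖ξ₁‖ ^ 2 ≤ ‖ξ‖ ^ 2 := by
    rw [norm_sq_eq_add_of_inner_self_eq_add h]
    exact le_add_of_nonneg_right (sq_nonneg _)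
  exact (pow_le_pow_iff_left₀ (norm_nonneg _) (norm_nonneg _) two_ne_zero).mp hsq

end NormSq

section PosDef

variable {𝕜 H₁ H₂ : Type*} [RCLike 𝕜]
  [NormedAddCommGroup H₁] [InnerProductSpace 𝕜 H₁]
  [NormedAddCommGroup H₂] [InnerProductSpace 𝕜 H₂]

theorem inner_self_nonneg_complexOrder (x : H₁) : (0 : 𝕜) ≤ inner 𝕜 x x := by
  rw [inner_self_eq_norm_sq_to_K]
  exact pow_nonneg (RCLike.ofReal_nonneg.mpr (norm_nonneg x)) 2

theorem inner_self_add_inner_self_posDef (ξ₁ : H₁) (ξ₂ : H₂) :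
    0 ≤ (inner 𝕜 ξ₁ ξ₁ : 𝕜) + inner 𝕜 ξ₂ ξ₂ ∧
      ((inner 𝕜 ξ₁ ξ₁ : 𝕜) + inner 𝕜 ξ₂ ξ₂ = 0 → ξ₁ = 0 ∧ ξ₂ = 0) := by
  have h₁ := inner_self_nonneg_complexOrder (𝕜 := 𝕜) ξ₁
  have h₂ := inner_self_nonneg_complexOrder (𝕜 := 𝕜) ξ₂
  refine ⟨add_nonneg h₁ h₂, fun hzero => ?_⟩
  obtain ⟨hz₁, hz₂⟩ := (add_eq_zero_iff_of_nonneg h₁ h₂).mp hzero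
  exact ⟨inner_self_eq_zero.mp hz₁, inner_self_eq_zero.mp hz₂⟩

end PosDef

theorem intersection_hilbert_subspace_general
    {E : Type*} [AddCommGroup E] [Module ℂ E] [TopologicalSpace E]
    {H₁ : Type*} [NormedAddCommGroup H₁] [InnerProductSpace ℂ H₁]
    {H₂ : Type*} [NormedAddCommGroup H₂] [InnerProductSpace ℂ H₂]
    {K : Type*} [NormedAddCommGroup K] [InnerProductSpace ℂ K]
    (J₁ : H₁ →L[ℂ] E) (hJ₁ : Function.Injective J₁)
    (J₂ : H₂ →L[ℂ] E)
    (JK : K →ₗ[ℂ] E)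
    (hrange : Set.range JK = Set.range J₁ ∩ Set.range J₂)
    (hip : ∀ (ξ χ : K) (ξ₁ χ₁ : H₁) (ξ₂ χ₂ : H₂),
      JK ξ = J₁ ξ₁ → JK ξ = J₂ ξ₂ → JK χ = J₁ χ₁ → JK χ = J₂ χ₂ →
      (inner ℂ ξ χ : ℂ) = inner ℂ ξ₁ χ₁ + inner ℂ ξ₂ χ₂) :
    -- the sum form is a positive definite inner product on the intersection
    (∀ (ξ₁ : H₁) (ξ₂ : H₂), J₁ ξ₁ = J₂ ξ₂ →
      0 ≤ (inner ℂ ξ₁ ξ₁ : ℂ) + inner ℂ ξ₂ ξ₂ ∧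
        ((inner ℂ ξ₁ ξ₁ : ℂ) + inner ℂ ξ₂ ξ₂ = 0 → ξ₁ = 0 ∧ ξ₂ = 0)) ∧
    -- the intersection is a Hilbert subspace of E: its inclusion is continuous
    Continuous JK ∧
    -- H₁ ∩ H₂ ≤ H₁ : the inclusion into H₁ has operator norm at most 1
    (∀ (ξ : K) (ξ₁ : H₁), JK ξ = J₁ ξ₁ → ‖ξ₁‖ ≤ ‖ξ‖) ∧
    -- H₁ ∩ H₂ ≤ H₂ : the inclusion into H₂ has operator norm at most 1
    (∀ (ξ : K) (ξ₂ : H₂), JK ξ = J₂ ξ₂ → ‖ξ₂‖ ≤ ‖ξ‖) := by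
  have hmem : ∀ ξ, JK ξ ∈ Set.range J₁ ∩ Set.range J₂ := fun ξ => hrange ▸ ⟨ξ, rfl⟩
  have norm_le₁ : ∀ (ξ : K) (ξ₁ : H₁), JK ξ = J₁ ξ₁ → ‖ξ₁‖ ≤ ‖ξ‖ := fun ξ ξ₁ h₁ => by
    obtain ⟨ξ₂, h₂⟩ := (hmem ξ).2
    exact norm_le_of_inner_self_eq_add (hip ξ ξ ξ₁ ξ₁ ξ₂ ξ₂ h₁ h₂.symm h₁ h₂.symm)
  have norm_le₂ : ∀ (ξ : K) (ξ₂ : H₂), JK ξ = J₂ ξ₂ → ‖ξ₂‖ ≤ ‖ξ‖ := fun ξ ξ₂ h₂ => by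
    obtain ⟨ξ₁, h₁⟩ := (hmem ξ).1
    exact norm_le_of_inner_self_eq_add
      ((hip ξ ξ ξ₁ ξ₁ ξ₂ ξ₂ h₁.symm h₂ h₁.symm h₂).trans (add_comm _ _))
  refine ⟨fun ξ₁ ξ₂ _ => inner_self_add_inner_self_posDef ξ₁ ξ₂, ?_, norm_le₁, norm_le₂⟩
  exact JK.continuous_of_range_subset_of_norm_le J₁ hJ₁
    (hrange ▸ Set.inter_subset_left) 1 fun ξ ξ₁ h => (one_mul ‖ξ‖).symm ▸ norm_le₁ ξ ξ₁ h

/-- Let `H₁, H₂` be Hilbert subspaces of `E`. The form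
`(ξ, χ) = (ξ, χ)_{H₁} + (ξ, χ)_{H₂}` on the intersection `H₁ ∩ H₂` is a positive
definite inner product, and the intersection, equipped with this inner product
(encoded by a complete inner product space `K` included in `E` via `JK`, whose range
is `range J₁ ∩ range J₂` and whose inner product is the sum of the two inner
products), is a Hilbert subspace of `E` with `H₁ ∩ H₂ ≤ H₁` and `H₁ ∩ H₂ ≤ H₂`. -/
theorem intersection_hilbert_subspace
    {E : Type*} [AddCommGroup E] [Module ℂ E] [TopologicalSpace E]
    {H₁ : Type*} [NormedAddCommGroup H₁] [InnerProductSpace ℂ H₁] [CompleteSpace H₁]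
    {H₂ : Type*} [NormedAddCommGroup H₂] [InnerProductSpace ℂ H₂] [CompleteSpace H₂]
    {K : Type*} [NormedAddCommGroup K] [InnerProductSpace ℂ K] [CompleteSpace K]
    (J₁ : H₁ →L[ℂ] E) (hJ₁ : Function.Injective J₁)
    (J₂ : H₂ →L[ℂ] E) (hJ₂ : Function.Injective J₂)
    (JK : K →ₗ[ℂ] E) (hJK : Function.Injective JK)
    (hrange : Set.range JK = Set.range J₁ ∩ Set.range J₂)
    (hip : ∀ (ξ χ : K) (ξ₁ χ₁ : H₁) (ξ₂ χ₂ : H₂),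
      JK ξ = J₁ ξ₁ → JK ξ = J₂ ξ₂ → JK χ = J₁ χ₁ → JK χ = J₂ χ₂ →
      (inner ℂ ξ χ : ℂ) = inner ℂ ξ₁ χ₁ + inner ℂ ξ₂ χ₂) :
    -- the sum form is a positive definite inner product on the intersection
    (∀ (ξ₁ : H₁) (ξ₂ : H₂), J₁ ξ₁ = J₂ ξ₂ →
      0 ≤ (inner ℂ ξ₁ ξ₁ : ℂ) + inner ℂ ξ₂ ξ₂ ∧
        ((inner ℂ ξ₁ ξ₁ : ℂ) + inner ℂ ξ₂ ξ₂ = 0 → ξ₁ = 0 ∧ ξ₂ = 0)) ∧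
    -- the intersection is a Hilbert subspace of E: its inclusion is continuous
    Continuous JK ∧
    -- H₁ ∩ H₂ ≤ H₁ : the inclusion into H₁ has operator norm at most 1
    (∀ (ξ : K) (ξ₁ : H₁), JK ξ = J₁ ξ₁ → ‖ξ₁‖ ≤ ‖ξ‖) ∧
    -- H₁ ∩ H₂ ≤ H₂ : the inclusion into H₂ has operator norm at most 1
    (∀ (ξ : K) (ξ₂ : H₂), JK ξ = J₂ ξ₂ → ‖ξ₂‖ ≤ ‖ξ‖) :=
  intersection_hilbert_subspace_general J₁ hJ₁ J₂ JK hrange hip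
end
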